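/- If two POMDPs D and D' are related by a probabilistic bisimulation respecting observations and rewards, then for every discount factor β ∈ (0,1) and every pair of bisimilar states s ≈ s', the maximal expected discounted reward over all observation-based policies from s in D equals that from s' in D'. -/
import Mathlib


open scoped Classical

/-- A POMDP with rewards. -/
structure POMDP (S O Act : Type*) where
  P : S → Act → S → ℝ
  R : S → Act → ℝ
  obs : S → O
  init : S

variable {S S' O Act : Type*}

/-- Valid finite paths. -/
inductive IsPath (M : POMDP S O Act) : S → List (Act × S) → Prop
  | nil (s : S) : IsPath M s []
  | cons {s : S} {a : Act} {s'' : S} {l : List (Act × S)}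
      (h : 0 < M.P s a s'') (ht : IsPath M s'' l) : IsPath M s ((a, s'') :: l)

/-- Observation sequence of a finite path. -/
def obsSeq {T O' : Type*} (lam : T → O') (π : T × List (Act × T)) :
    O' × List (Act × O') :=
  (lam π.1, π.2.map fun p => (p.1, lam p.2))

/-- Last state of a finite path. -/
def lastState {T : Type*} (π : T × List (Act × T)) : T :=
  (π.2.map Prod.snd).getLastD π.1

/-- A (history-dependent, randomized) policy. -/
def IsPolicy {T : Type*} [Fintype Act] (σ : T × List (Act × T) → Act → ℝ) : Prop :=
  ∀ π, (∀ a, 0 ≤ σ π a) ∧ ∑ a : Act, σ π a = 1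

/-- A policy is observation-based for paths starting in `s`. -/
def ObsBasedFrom (M : POMDP S O Act) (s : S) (σ : S × List (Act × S) → Act → ℝ) : Prop :=
  ∀ l₁ l₂ : List (Act × S), IsPath M s l₁ → IsPath M s l₂ →
    obsSeq M.obs (s, l₁) = obsSeq M.obs (s, l₂) → σ (s, l₁) = σ (s, l₂)

/-- Expected reward collected exactly `n` steps in the future under policy `σ`. -/
noncomputable def stepRew [Fintype S] [Fintype Act] (M : POMDP S O Act)
    (σ : S × List (Act × S) → Act → ℝ) : ℕ → S × List (Act × S) → ℝ
  | 0, π => ∑ a : Act, σ π a * M.R (lastState π) a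
  | (n + 1), π => ∑ a : Act, σ π a * ∑ t : S,
      M.P (lastState π) a t * stepRew M σ n (π.1, π.2 ++ [(a, t)])

/-- Expected discounted reward `E[∑_k β^k R(X_k, A_k)]` of policy `σ` from state `s`. -/
noncomputable def discValue [Fintype S] [Fintype Act] (M : POMDP S O Act)
    (σ : S × List (Act × S) → Act → ℝ) (β : ℝ) (s : S) : ℝ :=
  ∑' k : ℕ, β ^ k * stepRew M σ k (s, [])

/-- Maximal expected discounted reward from `s`, over all observation-based policies. -/
noncomputable def optDiscValue [Fintype S] [Fintype Act] (M : POMDP S O Act)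
    (β : ℝ) (s : S) : ℝ :=
  ⨆ σ : {σ : S × List (Act × S) → Act → ℝ // IsPolicy σ ∧ ObsBasedFrom M s σ},
    discValue M σ.1 β s

/-- Transition function on the disjoint union of the state spaces of two POMDPs. -/
def unionP (D : POMDP S O Act) (D' : POMDP S' O Act) :
    (S ⊕ S') → Act → (S ⊕ S') → ℝ
  | Sum.inl t, a, Sum.inl t' => D.P t a t'
  | Sum.inr u, a, Sum.inr u' => D'.P u a u'
  | _, _, _ => 0

/-- Observation function on the disjoint union. -/
def unionObs (D : POMDP S O Act) (D' : POMDP S' O Act) : (S ⊕ S') → O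
  | Sum.inl t => D.obs t
  | Sum.inr u => D'.obs u

/-- Reward function on the disjoint union. -/
def unionR (D : POMDP S O Act) (D' : POMDP S' O Act) : (S ⊕ S') → Act → ℝ
  | Sum.inl t, a => D.R t a
  | Sum.inr u, a => D'.R u a

/-- A probabilistic bisimulation respecting observations and rewards. -/
def IsBisim {U A O' : Type*} (Pc : U → A → U → ℝ) (obsc : U → O') (Rc : U → A → ℝ)
    (r : U → U → Prop) : Prop :=
  Equivalence r ∧ ∀ u v, r u v →
    obsc u = obsc v ∧ (∀ α, Rc u α = Rc v α) ∧
    ∀ (α : A) (C : Set U), (∀ x y, r x y → (x ∈ C ↔ y ∈ C)) →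
      ∑ᶠ x ∈ C, Pc u α x = ∑ᶠ x ∈ C, Pc v α x


section BisimAux

variable {S S' O Act : Type*}

lemma lastState_cons (s w : S) (b : Act) (l : List (Act × S)) :
    lastState ((s, (b, w) :: l) : S × List (Act × S)) = lastState (w, l) := by
  show (List.map Prod.snd ((b, w) :: l)).getLastD s = (List.map Prod.snd l).getLastD w
  rw [List.map_cons, List.getLastD_cons]

lemma lastState_concat (s t : S) (a : Act) (l : List (Act × S)) :
    lastState ((s, l ++ [(a, t)]) : S × List (Act × S)) = t := by
  simp [lastState]

lemma isPath_concat (M : POMDP S O Act) :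
    ∀ (l : List (Act × S)) (s : S), IsPath M s l →
      ∀ (a : Act) (t : S), 0 < M.P (lastState (s, l)) a t → IsPath M s (l ++ [(a, t)])
  | [], s, _, a, t, h => by
      simpa using IsPath.cons (by simpa [lastState] using h) (IsPath.nil t)
  | (b, w) :: l, s, hp, a, t, h => by
      cases hp with
      | cons hbw htl =>
          exact IsPath.cons hbw
            (isPath_concat M l w htl a t (by rwa [lastState_cons] at h))

/-- Core transfer lemma: bisimilar states assign equal expected values to
functions that agree across the bisimulation. -/
lemma bisim_transfer [Fintype S] [Fintype S']
    (D : POMDP S O Act) (D' : POMDP S' O Act)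
    (hP : ∀ s a t, 0 ≤ D.P s a t) (hP' : ∀ s a t, 0 ≤ D'.P s a t)
    (rel : (S ⊕ S') → (S ⊕ S') → Prop)
    (hbisim : IsBisim (unionP D D') (unionObs D D') (unionR D D') rel)
    {u : S} {v : S'} (huv : rel (Sum.inl u) (Sum.inr v)) (a : Act)
    (F : S → ℝ) (G : S' → ℝ)
    (hFG : ∀ t t', 0 < D.P u a t → 0 < D'.P v a t' → rel (Sum.inl t) (Sum.inr t') →
      F t = G t') :
    ∑ t : S, D.P u a t * F t = ∑ t' : S', D'.P v a t' * G t' := by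
  classical
  set p : (S ⊕ S') → ℝ := unionP D D' (Sum.inl u) a with hp
  set q : (S ⊕ S') → ℝ := unionP D D' (Sum.inr v) a with hq
  set f : (S ⊕ S') → ℝ := Sum.elim F G with hf
  have hpnn : ∀ w, 0 ≤ p w := by
    rintro (t | t)
    · exact hP u a t
    · exact le_refl 0
  have hqnn : ∀ w, 0 ≤ q w := by
    rintro (t | t)
    · exact le_refl 0
    · exact hP' v a t
  have hpr : ∀ t : S', p (Sum.inr t) = 0 := fun t => rfl
  have hql : ∀ t : S, q (Sum.inl t) = 0 := fun t => rfl
  have h1 : ∑ t : S, D.P u a t * F t = ∑ w : S ⊕ S', p w * f w := by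
    rw [Fintype.sum_sum_type]
    simp [hp, hf, unionP]
  have h2 : ∑ t' : S', D'.P v a t' * G t' = ∑ w : S ⊕ S', q w * f w := by
    rw [Fintype.sum_sum_type]
    simp [hq, hf, unionP]
  rw [h1, h2]
  set st : Setoid (S ⊕ S') := ⟨rel, hbisim.1⟩ with hst
  have hclass : ∀ c : Quotient st,
      ∑ x ∈ Finset.univ.filter (fun x => Quotient.mk st x = c), p x
        = ∑ x ∈ Finset.univ.filter (fun x => Quotient.mk st x = c), q x := by
    intro c
    obtain ⟨w0, rfl⟩ := Quotient.exists_rep c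
    have hresp : ∀ x y, rel x y →
        (x ∈ {z : S ⊕ S' | rel z w0} ↔ y ∈ {z : S ⊕ S' | rel z w0}) := by
      intro x y hxy
      exact ⟨fun hx => hbisim.1.trans (hbisim.1.symm hxy) hx,
        fun hy => hbisim.1.trans hxy hy⟩
    have hkey := (hbisim.2 _ _ huv).2.2 a {z : S ⊕ S' | rel z w0} hresp
    have hset : {z : S ⊕ S' | rel z w0}
        = ↑(Finset.univ.filter (fun x => Quotient.mk st x = Quotient.mk st w0)) := by
      ext x
      simp only [Set.mem_setOf_eq, Finset.coe_filter, Finset.mem_univ, true_and]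
      exact ⟨fun h => Quotient.sound h, fun h => Quotient.exact h⟩
    rw [hset, finsum_mem_coe_finset, finsum_mem_coe_finset] at hkey
    exact hkey
  rw [← Finset.sum_fiberwise Finset.univ (fun w => Quotient.mk st w) (fun w => p w * f w),
      ← Finset.sum_fiberwise Finset.univ (fun w => Quotient.mk st w) (fun w => q w * f w)]
  refine Finset.sum_congr rfl fun c _ => ?_
  set Fb := Finset.univ.filter (fun x => Quotient.mk st x = c) with hFb
  have hmass := hclass c
  have hrelFb : ∀ x ∈ Fb, ∀ y ∈ Fb, rel x y := by
    intro x hx y hy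
    rw [hFb, Finset.mem_filter] at hx hy
    exact Quotient.exact (hx.2.trans hy.2.symm)
  by_cases hz : ∑ x ∈ Fb, p x = 0
  · have hp0 : ∀ x ∈ Fb, p x = 0 :=
      (Finset.sum_eq_zero_iff_of_nonneg fun x _ => hpnn x).1 hz
    have hq0 : ∀ x ∈ Fb, q x = 0 :=
      (Finset.sum_eq_zero_iff_of_nonneg fun x _ => hqnn x).1 (hmass ▸ hz)
    rw [Finset.sum_eq_zero fun x hx => by rw [hp0 x hx, zero_mul],
        Finset.sum_eq_zero fun x hx => by rw [hq0 x hx, zero_mul]]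
  · obtain ⟨w₁, hw₁mem, hw₁⟩ := Finset.exists_ne_zero_of_sum_ne_zero hz
    have hz' : ∑ x ∈ Fb, q x ≠ 0 := by rw [← hmass]; exact hz
    obtain ⟨w₂, hw₂mem, hw₂⟩ := Finset.exists_ne_zero_of_sum_ne_zero hz'
    have key : ∀ x ∈ Fb, p x ≠ 0 → ∀ y ∈ Fb, q y ≠ 0 → f x = f y := by
      intro x hx hpx y hy hqy
      obtain (t | t) := x
      · obtain (t' | t') := y
        · exact absurd (hql t') hqy
        · have hpt : 0 < D.P u a t := lt_of_le_of_ne (hP u a t) (Ne.symm hpx)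
          have hqt : 0 < D'.P v a t' := lt_of_le_of_ne (hP' v a t') (Ne.symm hqy)
          exact hFG t t' hpt hqt (hrelFb _ hx _ hy)
      · exact absurd (hpr t) hpx
    have e1 : ∑ x ∈ Fb, p x * f x = (∑ x ∈ Fb, p x) * f w₂ := by
      rw [Finset.sum_mul]
      refine Finset.sum_congr rfl fun x hx => ?_
      by_cases hpx : p x = 0
      · rw [hpx, zero_mul, zero_mul]
      · rw [key x hx hpx w₂ hw₂mem hw₂]
    have e2 : ∑ x ∈ Fb, q x * f x = (∑ x ∈ Fb, q x) * f w₂ := by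
      rw [Finset.sum_mul]
      refine Finset.sum_congr rfl fun y hy => ?_
      by_cases hqy : q y = 0
      · rw [hqy, zero_mul, zero_mul]
      · rw [← key w₁ hw₁mem hw₁ y hy hqy, key w₁ hw₁mem hw₁ w₂ hw₂mem hw₂]
    rw [e1, e2, hmass]

/-- Step rewards agree for matched policies along bisimilar paths. -/
lemma stepRew_bisim [Fintype S] [Fintype S'] [Fintype Act]
    (D : POMDP S O Act) (D' : POMDP S' O Act)
    (hP : ∀ s a t, 0 ≤ D.P s a t) (hP' : ∀ s a t, 0 ≤ D'.P s a t)
    (rel : (S ⊕ S') → (S ⊕ S') → Prop)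
    (hbisim : IsBisim (unionP D D') (unionObs D D') (unionR D D') rel)
    (s : S) (s' : S')
    (σ : S × List (Act × S) → Act → ℝ) (σ' : S' × List (Act × S') → Act → ℝ)
    (hagree : ∀ l l', IsPath D s l → IsPath D' s' l' →
      obsSeq D.obs (s, l) = obsSeq D'.obs (s', l') → σ (s, l) = σ' (s', l')) :
    ∀ (n : ℕ) (l : List (Act × S)) (l' : List (Act × S')),
      IsPath D s l → IsPath D' s' l' →
      rel (Sum.inl (lastState (s, l))) (Sum.inr (lastState (s', l'))) →
      obsSeq D.obs (s, l) = obsSeq D'.obs (s', l') →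
      stepRew D σ n (s, l) = stepRew D' σ' n (s', l')
  | 0, l, l', hl, hl', hr, ho => by
      have hR := (hbisim.2 _ _ hr).2.1
      simp only [stepRew]
      rw [hagree l l' hl hl' ho]
      refine Finset.sum_congr rfl fun a _ => ?_
      rw [show D.R (lastState (s, l)) a = D'.R (lastState (s', l')) a from hR a]
  | (n + 1), l, l', hl, hl', hr, ho => by
      simp only [stepRew]
      rw [hagree l l' hl hl' ho]
      refine Finset.sum_congr rfl fun a _ => ?_
      congr 1
      refine bisim_transfer D D' hP hP' rel hbisim hr a _ _ ?_
      intro t t' hpt hpt' hrel2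
      have hobs_tt : D.obs t = D'.obs t' := (hbisim.2 _ _ hrel2).1
      have hl2 := isPath_concat D l s hl a t hpt
      have hl2' := isPath_concat D' l' s' hl' a t' hpt'
      have ho2 : obsSeq D.obs (s, l ++ [(a, t)])
          = obsSeq D'.obs (s', l' ++ [(a, t')]) := by
        simp only [obsSeq, Prod.mk.injEq, List.map_append, List.map_cons,
          List.map_nil] at ho ⊢
        exact ⟨ho.1, by rw [ho.2, hobs_tt]⟩
      exact stepRew_bisim D D' hP hP' rel hbisim s s' σ σ' hagree n
        (l ++ [(a, t)]) (l' ++ [(a, t')]) hl2 hl2'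
        (by rw [lastState_concat, lastState_concat]; exact hrel2) ho2

lemma uniform_policy {T : Type*} [Fintype Act] [Nonempty Act] :
    IsPolicy (fun (_ : T × List (Act × T)) (_ : Act) => (Fintype.card Act : ℝ)⁻¹) := by
  intro π
  constructor
  · intro a
    positivity
  · rw [Finset.sum_const, Finset.card_univ, nsmul_eq_mul]
    exact mul_inv_cancel₀ (by exact_mod_cast Fintype.card_ne_zero)

/-- Transport an observation-based policy across matching observation sequences. -/
lemma policy_transport [Fintype S] [Fintype S'] [Fintype Act] [Nonempty Act]
    (D : POMDP S O Act) (D' : POMDP S' O Act) (s : S) (s' : S')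
    (σ : S × List (Act × S) → Act → ℝ) (hpol : IsPolicy σ) (hobs : ObsBasedFrom D s σ) :
    ∃ σ' : S' × List (Act × S') → Act → ℝ, IsPolicy σ' ∧ ObsBasedFrom D' s' σ' ∧
      (∀ l l', IsPath D s l → IsPath D' s' l' →
        obsSeq D.obs (s, l) = obsSeq D'.obs (s', l') → σ (s, l) = σ' (s', l')) := by
  classical
  set Φ : O × List (Act × O) → Act → ℝ := fun o =>
    if h : ∃ l, IsPath D s l ∧ obsSeq D.obs (s, l) = o then σ (s, h.choose)
    else fun _ => (Fintype.card Act : ℝ)⁻¹ with hΦ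
  refine ⟨fun π => Φ (obsSeq D'.obs π), ?_, ?_, ?_⟩
  · intro π
    by_cases h : ∃ l, IsPath D s l ∧ obsSeq D.obs (s, l) = obsSeq D'.obs π
    · simp only [hΦ, dif_pos h]
      exact hpol _
    · simp only [hΦ, dif_neg h]
      exact uniform_policy (T := S') (π.1, π.2)
  · intro l₁ l₂ _ _ he
    exact congrArg Φ he
  · intro l l' hl hl' ho
    have hex : ∃ l0, IsPath D s l0 ∧ obsSeq D.obs (s, l0) = obsSeq D'.obs (s', l') :=
      ⟨l, hl, ho⟩
    simp only [hΦ, dif_pos hex]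
    exact hobs l hex.choose hl hex.choose_spec.1 (ho.trans hex.choose_spec.2.symm)

lemma weighted_abs_le {ι : Type*} [Fintype ι] (w g : ι → ℝ) (hw : ∀ i, 0 ≤ w i)
    (hsum : ∑ i, w i = 1) {Rm : ℝ} (hg : ∀ i, |g i| ≤ Rm) :
    |∑ i, w i * g i| ≤ Rm := by
  calc |∑ i, w i * g i| ≤ ∑ i, |w i * g i| := Finset.abs_sum_le_sum_abs _ _
    _ = ∑ i, w i * |g i| := Finset.sum_congr rfl fun i _ => by
        rw [abs_mul, abs_of_nonneg (hw i)]
    _ ≤ ∑ i, w i * Rm := Finset.sum_le_sum fun i _ =>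
        mul_le_mul_of_nonneg_left (hg i) (hw i)
    _ = Rm := by rw [← Finset.sum_mul, hsum, one_mul]

lemma stepRew_abs_le [Fintype S] [Fintype Act] (M : POMDP S O Act)
    (hP : ∀ s a t, 0 ≤ M.P s a t) (hrow : ∀ s a, ∑ t : S, M.P s a t = 1)
    (σ : S × List (Act × S) → Act → ℝ) (hσ : IsPolicy σ) {Rm : ℝ}
    (hR : ∀ u b, |M.R u b| ≤ Rm) :
    ∀ (n : ℕ) (π : S × List (Act × S)), |stepRew M σ n π| ≤ Rm
  | 0, π => by
      simp only [stepRew]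
      exact weighted_abs_le _ _ (hσ π).1 (hσ π).2 fun a => hR _ _
  | (n + 1), π => by
      simp only [stepRew]
      refine weighted_abs_le _ _ (hσ π).1 (hσ π).2 fun a => ?_
      exact weighted_abs_le _ _ (fun t => hP _ _ _) (hrow _ _)
        (fun t => stepRew_abs_le M hP hrow σ hσ hR n _)

lemma discValue_abs_le [Fintype S] [Fintype Act] (M : POMDP S O Act)
    (hP : ∀ s a t, 0 ≤ M.P s a t) (hrow : ∀ s a, ∑ t : S, M.P s a t = 1)
    (σ : S × List (Act × S) → Act → ℝ) (hσ : IsPolicy σ) {Rm : ℝ}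
    (hR : ∀ u b, |M.R u b| ≤ Rm) {β : ℝ} (hβ0 : 0 ≤ β) (hβ1 : β < 1) (s : S) :
    |discValue M σ β s| ≤ Rm * (1 - β)⁻¹ := by
  have hstep := stepRew_abs_le M hP hrow σ hσ hR
  have hgeo : Summable (fun k : ℕ => β ^ k) := summable_geometric_of_lt_one hβ0 hβ1
  have hsumRm : Summable (fun k : ℕ => β ^ k * Rm) := hgeo.mul_right _
  set g : ℕ → ℝ := fun k => β ^ k * stepRew M σ k (s, []) with hgdef
  have hle : ∀ k : ℕ, |g k| ≤ β ^ k * Rm := by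
    intro k
    rw [hgdef, abs_mul, abs_pow, abs_of_nonneg hβ0]
    exact mul_le_mul_of_nonneg_left (hstep k _) (pow_nonneg hβ0 k)
  have habs : Summable (fun k : ℕ => |g k|) :=
    Summable.of_nonneg_of_le (fun k => abs_nonneg _) hle hsumRm
  have hng : Summable (fun k : ℕ => ‖g k‖) := by
    simpa only [Real.norm_eq_abs] using habs
  have h1 : ‖∑' k : ℕ, g k‖ ≤ ∑' k : ℕ, ‖g k‖ := norm_tsum_le_tsum_norm hng
  simp only [Real.norm_eq_abs] at h1
  have h2 : ∑' k : ℕ, |g k| ≤ ∑' k : ℕ, β ^ k * Rm := Summable.tsum_le_tsum hle habs hsumRm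
  have h3 : ∑' k : ℕ, β ^ k * Rm = Rm * (1 - β)⁻¹ := by
    rw [tsum_mul_right, tsum_geometric_of_lt_one hβ0 hβ1, mul_comm]
  have h4 : discValue M σ β s = ∑' k : ℕ, g k := rfl
  rw [h4]
  exact h1.trans (h2.trans_eq h3)

lemma opt_le_opt [Fintype S] [Fintype S'] [Fintype Act] [Nonempty Act]
    (D : POMDP S O Act) (D' : POMDP S' O Act)
    (hP : ∀ s a t, 0 ≤ D.P s a t)
    (hP' : ∀ s a t, 0 ≤ D'.P s a t) (hrow' : ∀ s a, ∑ t : S', D'.P s a t = 1)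
    {β : ℝ} (hβ0 : 0 ≤ β) (hβ1 : β < 1)
    (rel : (S ⊕ S') → (S ⊕ S') → Prop)
    (hbisim : IsBisim (unionP D D') (unionObs D D') (unionR D D') rel)
    (s : S) (s' : S') (hrel : rel (Sum.inl s) (Sum.inr s')) :
    optDiscValue D β s ≤ optDiscValue D' β s' := by
  classical
  set Rm : ℝ := ∑ u : S', ∑ b : Act, |D'.R u b| with hRm
  have hR : ∀ u b, |D'.R u b| ≤ Rm := by
    intro u b
    refine le_trans (Finset.single_le_sum (f := fun c => |D'.R u c|)
      (fun c _ => abs_nonneg _) (Finset.mem_univ b)) ?_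
    exact Finset.single_le_sum (f := fun t => ∑ c : Act, |D'.R t c|)
      (fun t _ => Finset.sum_nonneg fun c _ => abs_nonneg _) (Finset.mem_univ u)
  have hbdd : BddAbove (Set.range fun τ :
      {σ : S' × List (Act × S') → Act → ℝ // IsPolicy σ ∧ ObsBasedFrom D' s' σ} =>
      discValue D' τ.1 β s') := by
    refine ⟨Rm * (1 - β)⁻¹, ?_⟩
    rintro x ⟨τ, rfl⟩
    exact le_trans (le_abs_self _) (discValue_abs_le D' hP' hrow' τ.1 τ.2.1 hR hβ0 hβ1 s')
  have hne : Nonempty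
      {σ : S × List (Act × S) → Act → ℝ // IsPolicy σ ∧ ObsBasedFrom D s σ} :=
    ⟨⟨fun _ _ => (Fintype.card Act : ℝ)⁻¹, uniform_policy, fun _ _ _ _ _ => rfl⟩⟩
  rw [optDiscValue, optDiscValue]
  refine ciSup_le fun σ => ?_
  obtain ⟨σ', hpol', hobs', hagree⟩ := policy_transport D D' s s' σ.1 σ.2.1 σ.2.2
  have hval : discValue D σ.1 β s = discValue D' σ' β s' := by
    refine tsum_congr fun k => ?_
    congr 1
    exact stepRew_bisim D D' hP hP' rel hbisim s s' σ.1 σ' hagree k [] []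
      (IsPath.nil s) (IsPath.nil s') (by simpa [lastState] using hrel)
      (by
        have hob : D.obs s = D'.obs s' := (hbisim.2 _ _ hrel).1
        simp [obsSeq, hob])
  rw [hval]
  exact le_ciSup hbdd ⟨σ', hpol', hobs'⟩


/-- Transport in the reverse direction. -/
lemma policy_transport' [Fintype S] [Fintype S'] [Fintype Act] [Nonempty Act]
    (D : POMDP S O Act) (D' : POMDP S' O Act) (s : S) (s' : S')
    (σ' : S' × List (Act × S') → Act → ℝ) (hpol : IsPolicy σ')
    (hobs : ObsBasedFrom D' s' σ') :
    ∃ σ : S × List (Act × S) → Act → ℝ, IsPolicy σ ∧ ObsBasedFrom D s σ ∧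
      (∀ l l', IsPath D s l → IsPath D' s' l' →
        obsSeq D.obs (s, l) = obsSeq D'.obs (s', l') → σ (s, l) = σ' (s', l')) := by
  classical
  set Φ : O × List (Act × O) → Act → ℝ := fun o =>
    if h : ∃ l', IsPath D' s' l' ∧ obsSeq D'.obs (s', l') = o then σ' (s', h.choose)
    else fun _ => (Fintype.card Act : ℝ)⁻¹ with hΦ
  refine ⟨fun π => Φ (obsSeq D.obs π), ?_, ?_, ?_⟩
  · intro π
    by_cases h : ∃ l', IsPath D' s' l' ∧ obsSeq D'.obs (s', l') = obsSeq D.obs π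
    · simp only [hΦ, dif_pos h]
      exact hpol _
    · simp only [hΦ, dif_neg h]
      exact uniform_policy (T := S) (π.1, π.2)
  · intro l₁ l₂ _ _ he
    exact congrArg Φ he
  · intro l l' hl hl' ho
    have hex : ∃ l0, IsPath D' s' l0 ∧ obsSeq D'.obs (s', l0) = obsSeq D.obs (s, l) :=
      ⟨l', hl', ho.symm⟩
    simp only [hΦ, dif_pos hex]
    exact hobs hex.choose l' hex.choose_spec.1 hl' (hex.choose_spec.2.trans ho)

lemma opt_le_opt' [Fintype S] [Fintype S'] [Fintype Act] [Nonempty Act]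
    (D : POMDP S O Act) (D' : POMDP S' O Act)
    (hP : ∀ s a t, 0 ≤ D.P s a t) (hrow : ∀ s a, ∑ t : S, D.P s a t = 1)
    (hP' : ∀ s a t, 0 ≤ D'.P s a t)
    {β : ℝ} (hβ0 : 0 ≤ β) (hβ1 : β < 1)
    (rel : (S ⊕ S') → (S ⊕ S') → Prop)
    (hbisim : IsBisim (unionP D D') (unionObs D D') (unionR D D') rel)
    (s : S) (s' : S') (hrel : rel (Sum.inl s) (Sum.inr s')) :
    optDiscValue D' β s' ≤ optDiscValue D β s := by
  classical
  set Rm : ℝ := ∑ u : S, ∑ b : Act, |D.R u b| with hRm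
  have hR : ∀ u b, |D.R u b| ≤ Rm := by
    intro u b
    refine le_trans (Finset.single_le_sum (f := fun c => |D.R u c|)
      (fun c _ => abs_nonneg _) (Finset.mem_univ b)) ?_
    exact Finset.single_le_sum (f := fun t => ∑ c : Act, |D.R t c|)
      (fun t _ => Finset.sum_nonneg fun c _ => abs_nonneg _) (Finset.mem_univ u)
  have hbdd : BddAbove (Set.range fun τ :
      {σ : S × List (Act × S) → Act → ℝ // IsPolicy σ ∧ ObsBasedFrom D s σ} =>
      discValue D τ.1 β s) := by
    refine ⟨Rm * (1 - β)⁻¹, ?_⟩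
    rintro x ⟨τ, rfl⟩
    exact le_trans (le_abs_self _) (discValue_abs_le D hP hrow τ.1 τ.2.1 hR hβ0 hβ1 s)
  have hne : Nonempty
      {σ : S' × List (Act × S') → Act → ℝ // IsPolicy σ ∧ ObsBasedFrom D' s' σ} :=
    ⟨⟨fun _ _ => (Fintype.card Act : ℝ)⁻¹, uniform_policy, fun _ _ _ _ _ => rfl⟩⟩
  rw [optDiscValue, optDiscValue]
  refine ciSup_le fun τ => ?_
  obtain ⟨σ, hpol, hobs, hagree⟩ := policy_transport' D D' s s' τ.1 τ.2.1 τ.2.2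
  have hval : discValue D σ β s = discValue D' τ.1 β s' := by
    refine tsum_congr fun k => ?_
    congr 1
    exact stepRew_bisim D D' hP hP' rel hbisim s s' σ τ.1 hagree k [] []
      (IsPath.nil s) (IsPath.nil s') (by simpa [lastState] using hrel)
      (by
        have hob : D.obs s = D'.obs s' := (hbisim.2 _ _ hrel).1
        simp [obsSeq, hob])
  rw [← hval]
  exact le_ciSup hbdd ⟨σ, hpol, hobs⟩

end BisimAux

/-- Bisimilar states of bisimilar POMDPs have the same maximal expected discounted
reward over all observation-based policies, for every discount factor `β ∈ (0,1)`. -/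
theorem stmt13 [Fintype S] [Fintype S'] [Fintype Act]
    (D : POMDP S O Act) (D' : POMDP S' O Act)
    (hP : ∀ s a t, 0 ≤ D.P s a t) (hrow : ∀ s a, ∑ t : S, D.P s a t = 1)
    (hP' : ∀ s a t, 0 ≤ D'.P s a t) (hrow' : ∀ s a, ∑ t : S', D'.P s a t = 1)
    (β : ℝ) (hβ : β ∈ Set.Ioo (0 : ℝ) 1)
    (rel : (S ⊕ S') → (S ⊕ S') → Prop)
    (hbisim : IsBisim (unionP D D') (unionObs D D') (unionR D D') rel)
    (s : S) (s' : S') (hrel : rel (Sum.inl s) (Sum.inr s')) :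
    optDiscValue D β s = optDiscValue D' β s' := by
  obtain ⟨hβ0, hβ1⟩ := hβ
  by_cases hA : Nonempty Act
  · exact le_antisymm
      (opt_le_opt D D' hP hP' hrow' hβ0.le hβ1 rel hbisim s s' hrel)
      (opt_le_opt' D D' hP hrow hP' hβ0.le hβ1 rel hbisim s s' hrel)
  · have hAe : IsEmpty Act := not_nonempty_iff.mp hA
    have e1 : IsEmpty
        {σ : S × List (Act × S) → Act → ℝ // IsPolicy σ ∧ ObsBasedFrom D s σ} := by
      constructor
      rintro ⟨σ, hpol, -⟩
      have h := (hpol (s, [])).2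
      rw [Finset.univ_eq_empty, Finset.sum_empty] at h
      exact zero_ne_one h
    have e2 : IsEmpty
        {σ : S' × List (Act × S') → Act → ℝ // IsPolicy σ ∧ ObsBasedFrom D' s' σ} := by
      constructor
      rintro ⟨σ, hpol, -⟩
      have h := (hpol (s', [])).2
      rw [Finset.univ_eq_empty, Finset.sum_empty] at h
      exact zero_ne_one h
    rw [optDiscValue, optDiscValue, Real.iSup_of_isEmpty, Real.iSup_of_isEmpty]
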